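/- Suppose y = Φ x_true + n with ‖n‖₂ ≤ ε, x_true ∈ {0,1}^N binary and s-sparse, and Φ satisfies the BRIP of order 2s with δ_{2s}^b < √2 - 1. Let x* solve the relaxed convex program (minimize ‖x‖₁ subject to ‖Φx - y‖₂ ≤ ε, 0 ≤ x ≤ 1). If ε is small enough that Cε < 1/2 where C = 4√(1+δ_{2s}^b)/(1 - (√2+1)δ_{2s}^b), then entrywise rounding of x* at threshold 1/2 exactly recovers x_true. -/

import Mathlib

/-!
Write `h = x* - x_true` and `T = supp x_true`. Since `x_true` is binary and `0 ≤ x* ≤ 1`, `h` lies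
in the unit cube, and so does every vector rescaled to unit `ℓ₂` norm (an entry never exceeds the
`ℓ₂` norm); this is what lets the box-restricted isometry property replace the usual RIP in
Candès' argument. Optimality of `x*` against the feasible point `x_true` gives the cone condition
`‖h_{Tᶜ}‖₁ ≤ ‖h_T‖₁`, and feasibility of both gives `‖Φ h‖₂ ≤ 2ε`. Cutting `Tᶜ` into blocks of
size `s` in decreasing order of `|h|`, the first block `T₁` holds the largest entries, so
`‖h‖_∞ ≤ ‖h_{T ∪ T₁}‖₂`, and Candès' estimate bounds the latter by
`2√(1+δ) ε / (1 - (√2+1)δ) = Cε/2 < 1/4`. Rounding at `1/2` therefore returns `x_true`.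
-/

noncomputable def l2 {n : ℕ} (x : Fin n → ℝ) : ℝ := Real.sqrt (∑ i, (x i) ^ 2)
def l1 {n : ℕ} (x : Fin n → ℝ) : ℝ := ∑ i, |x i|

open Finset Matrix

section L2

variable {N : ℕ}

lemma l2_eq_norm (x : Fin N → ℝ) : l2 x = ‖WithLp.toLp 2 x‖ := by
  simp [l2, EuclideanSpace.norm_eq]

lemma l2_nonneg (x : Fin N → ℝ) : 0 ≤ l2 x := Real.sqrt_nonneg _

lemma sq_l2 (x : Fin N → ℝ) : l2 x ^ 2 = ∑ i, x i ^ 2 := Real.sq_sqrt (by positivity)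

lemma abs_le_l2 (x : Fin N → ℝ) (i : Fin N) : |x i| ≤ l2 x := by
  simpa [l2_eq_norm] using PiLp.norm_apply_le (WithLp.toLp 2 x) i

@[simp]
lemma l2_zero : l2 (0 : Fin N → ℝ) = 0 := by simp [l2]

lemma l2_eq_zero {x : Fin N → ℝ} : l2 x = 0 ↔ x = 0 := by
  simp [l2_eq_norm]

lemma l2_add_le (u v : Fin N → ℝ) : l2 (u + v) ≤ l2 u + l2 v := by
  simpa only [l2_eq_norm, WithLp.toLp_add] using norm_add_le _ _

lemma l2_neg (x : Fin N → ℝ) : l2 (-x) = l2 x := by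
  simp only [l2_eq_norm, WithLp.toLp_neg, norm_neg]

lemma l2_smul (c : ℝ) (x : Fin N → ℝ) : l2 (c • x) = |c| * l2 x := by
  simp only [l2_eq_norm, WithLp.toLp_smul, norm_smul, Real.norm_eq_abs]

lemma abs_dotProduct_le_l2_mul_l2 (u v : Fin N → ℝ) : |u ⬝ᵥ v| ≤ l2 u * l2 v := by
  simpa [l2_eq_norm, EuclideanSpace.inner_toLp_toLp, dotProduct_comm, mul_comm] using
    abs_real_inner_le_norm (WithLp.toLp 2 u) (WithLp.toLp 2 v)

lemma sq_l2_add (u v : Fin N → ℝ) : l2 (u + v) ^ 2 = l2 u ^ 2 + 2 * (u ⬝ᵥ v) + l2 v ^ 2 := by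
  simpa [l2_eq_norm, EuclideanSpace.inner_toLp_toLp, dotProduct_comm] using
    norm_add_sq_real (WithLp.toLp 2 u) (WithLp.toLp 2 v)

lemma sq_l2_indicator (A : Finset (Fin N)) (x : Fin N → ℝ) :
    l2 ((A : Set (Fin N)).indicator x) ^ 2 = ∑ j ∈ A, x j ^ 2 := by
  rw [sq_l2, ← sum_indicator_subset _ (subset_univ A)]
  refine sum_congr rfl fun j _ => ?_
  by_cases hj : j ∈ A <;> simp [hj]

lemma dotProduct_eq_zero_of_disjoint {u v : Fin N → ℝ} {A B : Finset (Fin N)}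
    (hu : Function.support u ⊆ A) (hv : Function.support v ⊆ B) (hAB : Disjoint A B) :
    u ⬝ᵥ v = 0 :=
  sum_eq_zero fun j _ => by
    by_cases hj : u j = 0
    · simp [hj]
    · simp [Function.notMem_support.mp fun h => disjoint_left.mp hAB (hu hj) (hv h)]

lemma dotProduct_self_eq_sq_l2 (u : Fin N → ℝ) : u ⬝ᵥ u = l2 u ^ 2 := by
  rw [sq_l2]; simp only [dotProduct, sq]

lemma sq_l2_add_smul (u v : Fin N → ℝ) (c : ℝ) :
    l2 (u + c • v) ^ 2 = l2 u ^ 2 + 2 * c * (u ⬝ᵥ v) + c ^ 2 * l2 v ^ 2 := by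
  rw [sq_l2_add, l2_smul, dotProduct_smul, smul_eq_mul, mul_pow, sq_abs]
  ring

lemma l2_le_l2_add_of_dotProduct_eq_zero {u v : Fin N → ℝ} (huv : u ⬝ᵥ v = 0) :
    l2 u ≤ l2 (u + v) := by
  refine abs_le_of_sq_le_sq' ?_ (l2_nonneg _) |>.2
  rw [sq_l2_add, huv]
  nlinarith [sq_nonneg (l2 v)]

lemma l2_add_l2_le_sqrt_two_mul_of_dotProduct_eq_zero {u v : Fin N → ℝ} (huv : u ⬝ᵥ v = 0) :
    l2 u + l2 v ≤ √2 * l2 (u + v) := by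
  refine abs_le_of_sq_le_sq' ?_ (by positivity [l2_nonneg (u + v)]) |>.2
  rw [mul_pow, Real.sq_sqrt zero_le_two, sq_l2_add, huv]
  nlinarith [sq_nonneg (l2 u - l2 v)]

end L2

/-- The paper's BRIP of order `K` with constant `δ`: the RIP inequalities, required only for
`K`-sparse vectors in the unit `ℓ∞` ball. -/
def BRIP {M N : ℕ} (Φ : Matrix (Fin M) (Fin N) ℝ) (K : ℕ) (δ : ℝ) : Prop :=
  ∀ v : Fin N → ℝ, Set.ncard (Function.support v) ≤ K → (∀ i, |v i| ≤ 1) →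
    (1 - δ) * (l2 v) ^ 2 ≤ (l2 (Φ.mulVec v)) ^ 2 ∧ (l2 (Φ.mulVec v)) ^ 2 ≤ (1 + δ) * (l2 v) ^ 2

namespace BRIP

variable {M N K : ℕ} {Φ : Matrix (Fin M) (Fin N) ℝ} {δ : ℝ}

lemma of_support_subset (hΦ : BRIP Φ K δ) {v : Fin N → ℝ} {A : Finset (Fin N)}
    (hv : Function.support v ⊆ A) (hA : A.card ≤ K) (hv1 : ∀ i, |v i| ≤ 1) :
    (1 - δ) * l2 v ^ 2 ≤ l2 (Φ *ᵥ v) ^ 2 ∧ l2 (Φ *ᵥ v) ^ 2 ≤ (1 + δ) * l2 v ^ 2 :=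
  hΦ v ((Set.ncard_le_ncard hv A.finite_toSet).trans (by simpa using hA)) hv1

lemma nonneg (hΦ : BRIP Φ K δ) (hK : 1 ≤ K) (i : Fin N) : 0 ≤ δ := by
  set e : Fin N → ℝ := Pi.single i 1
  have hv : Function.support e ⊆ ({i} : Finset (Fin N)) := by
    simpa using Pi.support_single_subset
  have hv1 : ∀ j, |e j| ≤ 1 := fun j => by
    by_cases hj : j = i <;> simp [e, hj]
  have hl2 : l2 e = 1 := by
    simp [l2, e, Pi.single_apply]
  have := hΦ.of_support_subset hv (by simpa using hK) hv1
  rw [hl2] at this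
  linarith [this.1, this.2]

lemma l2_mulVec_le (hΦ : BRIP Φ K δ) {v : Fin N → ℝ} {A : Finset (Fin N)}
    (hv : Function.support v ⊆ A) (hA : A.card ≤ K) (hv1 : ∀ i, |v i| ≤ 1) :
    l2 (Φ *ᵥ v) ≤ √(1 + δ) * l2 v := by
  rw [← Real.sqrt_sq (l2_nonneg v), ← Real.sqrt_mul' _ (sq_nonneg _)]
  exact Real.le_sqrt_of_sq_le (hΦ.of_support_subset hv hA hv1).2

lemma abs_dotProduct_mulVec_le_of_l2_eq_one (hΦ : BRIP Φ K δ) {u v : Fin N → ℝ}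
    {A B : Finset (Fin N)} (hu : Function.support u ⊆ A) (hv : Function.support v ⊆ B)
    (hAB : Disjoint A B) (hK : A.card + B.card ≤ K) (hu1 : l2 u = 1) (hv1 : l2 v = 1) :
    |(Φ *ᵥ u) ⬝ᵥ (Φ *ᵥ v)| ≤ δ := by
  have huv : u ⬝ᵥ v = 0 := dotProduct_eq_zero_of_disjoint hu hv hAB
  -- polarization: `u ± v` are unit-box vectors of squared norm `2` supported on `A ∪ B`
  have hpolar : ∀ c : ℝ, |c| = 1 →
      2 * (1 - δ) ≤ l2 (Φ *ᵥ u) ^ 2 + 2 * c * ((Φ *ᵥ u) ⬝ᵥ (Φ *ᵥ v)) + l2 (Φ *ᵥ v) ^ 2 ∧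
      l2 (Φ *ᵥ u) ^ 2 + 2 * c * ((Φ *ᵥ u) ⬝ᵥ (Φ *ᵥ v)) + l2 (Φ *ᵥ v) ^ 2 ≤ 2 * (1 + δ) := by
    intro c hc
    have hc2 : c ^ 2 = 1 := by rw [← sq_abs, hc, one_pow]
    have hsupp : Function.support (u + c • v) ⊆ ↑(A ∪ B) := by
      refine (Function.support_add _ _).trans ?_
      rw [coe_union]
      exact Set.union_subset_union hu ((Function.support_const_smul_subset c v).trans hv)
    have hbox : ∀ i, |(u + c • v) i| ≤ 1 := by
      intro i
      by_cases hi : u i = 0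
      · simpa [hi, abs_mul, hc, hv1] using abs_le_l2 v i
      · have : v i = 0 := Function.notMem_support.mp fun h => disjoint_left.mp hAB (hu hi) (hv h)
        simpa [this, hu1] using abs_le_l2 u i
    have := hΦ.of_support_subset hsupp ((card_union_le A B).trans hK) hbox
    rw [sq_l2_add_smul, mulVec_add, mulVec_smul, sq_l2_add_smul, huv, hu1, hv1, hc2] at this
    constructor <;> linarith [this.1, this.2]
  have h1 := hpolar 1 (by simp)
  have h2 := hpolar (-1) (by simp)
  rw [abs_le]
  constructor <;> nlinarith [h1.1, h1.2, h2.1, h2.2]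

lemma abs_dotProduct_mulVec_le (hΦ : BRIP Φ K δ) {u v : Fin N → ℝ} {A B : Finset (Fin N)}
    (hu : Function.support u ⊆ A) (hv : Function.support v ⊆ B) (hAB : Disjoint A B)
    (hK : A.card + B.card ≤ K) :
    |(Φ *ᵥ u) ⬝ᵥ (Φ *ᵥ v)| ≤ δ * (l2 u * l2 v) := by
  rcases eq_or_ne u 0 with rfl | hu0
  · simp
  rcases eq_or_ne v 0 with rfl | hv0
  · simp
  have ha : 0 < l2 u := (l2_nonneg u).lt_of_ne' (mt l2_eq_zero.mp hu0)
  have hb : 0 < l2 v := (l2_nonneg v).lt_of_ne' (mt l2_eq_zero.mp hv0)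
  have hunit : ∀ w : Fin N → ℝ, 0 < l2 w → l2 ((l2 w)⁻¹ • w) = 1 := fun w hw => by
    rw [l2_smul, abs_inv, abs_of_pos hw, inv_mul_cancel₀ hw.ne']
  have := hΦ.abs_dotProduct_mulVec_le_of_l2_eq_one
    ((Function.support_const_smul_subset _ u).trans hu)
    ((Function.support_const_smul_subset _ v).trans hv) hAB hK (hunit u ha) (hunit v hb)
  rw [mulVec_smul, mulVec_smul, smul_dotProduct, dotProduct_smul, smul_eq_mul, smul_eq_mul,
    abs_mul, abs_mul, abs_inv, abs_inv, abs_of_pos ha, abs_of_pos hb] at this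
  rw [← mul_le_mul_iff_of_pos_left (mul_pos ha hb)] at this
  field_simp at this
  linarith

lemma mul_l2_le_of_decomposition {s : ℕ} (hΦ : BRIP Φ (2 * s) δ) (hδ : 0 ≤ δ) {κ : Type*}
    {T0 T1 : Finset (Fin N)} {B : κ → Finset (Fin N)} {u0 u1 : Fin N → ℝ} {r : κ → Fin N → ℝ}
    (t : Finset κ) (hT0 : T0.card ≤ s) (hT1 : T1.card ≤ s) (hB : ∀ k, (B k).card ≤ s)
    (hT01 : Disjoint T0 T1) (hT0B : ∀ k, Disjoint T0 (B k)) (hT1B : ∀ k, Disjoint T1 (B k))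
    (hu0 : Function.support u0 ⊆ T0) (hu1 : Function.support u1 ⊆ T1)
    (hr : ∀ k, Function.support (r k) ⊆ B k) (hbox : ∀ i, |u0 i + u1 i| ≤ 1)
    (htail : ∑ k ∈ t, l2 (r k) ≤ l2 u0) :
    (1 - (√2 + 1) * δ) * l2 (u0 + u1) ≤ √(1 + δ) * l2 (Φ *ᵥ (u0 + u1 + ∑ k ∈ t, r k)) := by
  set u := u0 + u1
  set x := u + ∑ k ∈ t, r k
  set a := l2 u
  have hsupp : Function.support u ⊆ ↑(T0 ∪ T1) := by
    rw [coe_union]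
    exact (Function.support_add _ _).trans (Set.union_subset_union hu0 hu1)
  have hcard : (T0 ∪ T1).card ≤ 2 * s := (card_union_le _ _).trans (by omega)
  have hsplit : l2 (Φ *ᵥ u) ^ 2
      = (Φ *ᵥ u) ⬝ᵥ (Φ *ᵥ x) - ∑ k ∈ t, (Φ *ᵥ u) ⬝ᵥ (Φ *ᵥ r k) := by
    have hx : Φ *ᵥ x = Φ *ᵥ u + ∑ k ∈ t, Φ *ᵥ r k := by rw [← mulVec_sum, ← mulVec_add]
    rw [hx, dotProduct_add, dotProduct_sum, dotProduct_self_eq_sq_l2]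
    ring
  have hhead : (Φ *ᵥ u) ⬝ᵥ (Φ *ᵥ x) ≤ √(1 + δ) * a * l2 (Φ *ᵥ x) :=
    (le_abs_self _).trans ((abs_dotProduct_le_l2_mul_l2 _ _).trans
      (mul_le_mul_of_nonneg_right (hΦ.l2_mulVec_le hsupp hcard hbox) (l2_nonneg _)))
  have hcross : ∀ k, -((Φ *ᵥ u) ⬝ᵥ (Φ *ᵥ r k)) ≤ δ * (l2 u0 + l2 u1) * l2 (r k) := by
    intro k
    have h0 := hΦ.abs_dotProduct_mulVec_le hu0 (hr k) (hT0B k) (by linarith [hB k])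
    have h1 := hΦ.abs_dotProduct_mulVec_le hu1 (hr k) (hT1B k) (by linarith [hB k])
    rw [mulVec_add, add_dotProduct]
    linarith [(abs_le.mp h0).1, (abs_le.mp h1).1]
  have hsum : -∑ k ∈ t, (Φ *ᵥ u) ⬝ᵥ (Φ *ᵥ r k) ≤ δ * (l2 u0 + l2 u1) * l2 u0 := by
    rw [← sum_neg_distrib]
    calc ∑ k ∈ t, -((Φ *ᵥ u) ⬝ᵥ (Φ *ᵥ r k))
        ≤ ∑ k ∈ t, δ * (l2 u0 + l2 u1) * l2 (r k) := sum_le_sum fun k _ => hcross k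
      _ = δ * (l2 u0 + l2 u1) * ∑ k ∈ t, l2 (r k) := (mul_sum _ _ _).symm
      _ ≤ δ * (l2 u0 + l2 u1) * l2 u0 :=
        mul_le_mul_of_nonneg_left htail (by positivity [l2_nonneg u0, l2_nonneg u1])
  have hu01 := dotProduct_eq_zero_of_disjoint hu0 hu1 hT01
  have hprod : δ * (l2 u0 + l2 u1) * l2 u0 ≤ δ * √2 * a * a := by
    have := mul_le_mul (l2_add_l2_le_sqrt_two_mul_of_dotProduct_eq_zero hu01)
      (l2_le_l2_add_of_dotProduct_eq_zero hu01) (l2_nonneg _) (by positivity [l2_nonneg u])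
    nlinarith
  have hlow := (hΦ.of_support_subset hsupp hcard hbox).1
  have hmain : (1 - (√2 + 1) * δ) * a * a ≤ √(1 + δ) * l2 (Φ *ᵥ x) * a := by nlinarith
  rcases (show 0 ≤ a from l2_nonneg u).eq_or_lt with ha | ha
  · rw [← ha, mul_zero]
    positivity [l2_nonneg (Φ *ᵥ x)]
  · exact le_of_mul_le_mul_right hmain ha

end BRIP

section Ranking

variable {ι : Type*} [Fintype ι] [DecidableEq ι]

lemma exists_equiv_fin_head_then_antitone (T : Finset ι) (g : ι → ℝ) :
    ∃ p : ι ≃ Fin (Fintype.card ι), (∀ j, j ∈ T ↔ (p j : ℕ) < T.card) ∧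
      ∀ j j', T.card ≤ (p j : ℕ) → p j ≤ p j' → g j' ≤ g j := by
  let e := Fintype.equivFin ι
  -- sorting by this key lists `T` first, then the other indices by decreasing `g`
  let key : ι → Lex (Bool × ℝ) := fun j => toLex (decide (j ∉ T), -g j)
  let p := e.trans (Tuple.sort (key ∘ e.symm)).symm
  have hkey : ∀ j j', p j ≤ p j' → key j ≤ key j' := by
    intro j j' hle
    simpa [p] using Tuple.monotone_sort (key ∘ e.symm) hle
  have hTfirst : ∀ j j', j ∈ T → j' ∉ T → p j < p j' := by
    intro j j' hj hj'
    by_contra! hle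
    have := hkey _ _ hle
    simp [key, Prod.Lex.le_iff, hj, hj'] at this
    exact absurd this (by decide)
  have hprefix : ∀ j, j ∈ T ↔ (p j : ℕ) < T.card := by
    intro j
    constructor
    · intro hj
      have hmaps : Set.MapsTo p.symm (Iic (p j) : Set _) T := fun i hi => by
        by_contra hi'
        have := hTfirst j (p.symm i) hj hi'
        simp only [Equiv.apply_symm_apply] at this
        exact absurd (mem_Iic.mp hi) (not_le.mpr this)
      simpa [Fin.card_Iic] using card_le_card_of_injOn p.symm hmaps p.symm.injective.injOn
    · intro hlt
      by_contra hj
      have hmaps : Set.MapsTo p T (Iio (p j) : Set _) := fun j' hj' =>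
        mem_Iio.mpr (hTfirst j' j hj' hj)
      have := card_le_card_of_injOn p hmaps p.injective.injOn
      simp only [Fin.card_Iio] at this
      omega
  refine ⟨p, hprefix, fun j j' hj hle => ?_⟩
  have hjT : j ∉ T := by rw [hprefix]; omega
  have hj'T : j' ∉ T := by rw [hprefix]; have : (p j : ℕ) ≤ p j' := hle; omega
  simpa [key, Prod.Lex.le_iff, hjT, hj'T] using hkey j j' hle

end Ranking

section Blocks

variable {ι : Type*} [Fintype ι] {n : ℕ}

def rankBlock (p : ι ≃ Fin n) (s k : ℕ) : Finset ι := univ.filter fun j => (p j : ℕ) / s = k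

variable {p : ι ≃ Fin n} {s k : ℕ}

lemma mem_rankBlock {j : ι} : j ∈ rankBlock p s k ↔ (p j : ℕ) / s = k := by
  simp [rankBlock]

lemma card_rankBlock_le (hs : 0 < s) : (rankBlock p s k).card ≤ s := by
  have hmaps : Set.MapsTo (fun j => (p j : ℕ)) (rankBlock p s k) (Ico (k * s) (k * s + s)) := by
    intro j hj
    rw [mem_coe, mem_rankBlock] at hj
    subst hj
    exact mem_Ico.mpr ⟨Nat.div_mul_le_self _ _, Nat.lt_div_mul_add hs⟩
  simpa using card_le_card_of_injOn _ hmaps fun a _ b _ h => p.injective (Fin.ext h)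

lemma le_card_rankBlock (hs : 0 < s) (hne : (rankBlock p s (k + 1)).Nonempty) :
    s ≤ (rankBlock p s k).card := by
  obtain ⟨j, hj⟩ := hne
  have hj' : (k + 1) * s ≤ p j := by
    rw [← Nat.le_div_iff_mul_le hs, mem_rankBlock.mp hj]
  have hsub : Ico (k * s) (k * s + s) ⊆ (rankBlock p s k).image fun j => (p j : ℕ) := by
    intro i hi
    obtain ⟨hi1, hi2⟩ := mem_Ico.mp hi
    have hin : i < n := by linarith [(p j).isLt]
    refine mem_image.mpr ⟨p.symm ⟨i, hin⟩, mem_rankBlock.mpr ?_, by simp⟩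
    rw [Equiv.apply_symm_apply]
    exact Nat.div_eq_of_lt_le hi1 (by linarith)
  simpa using (card_le_card hsub).trans card_image_le

lemma disjoint_rankBlock {k k' : ℕ} (h : k ≠ k') : Disjoint (rankBlock p s k) (rankBlock p s k') :=
  disjoint_left.mpr fun _ hj hj' => h ((mem_rankBlock.mp hj).symm.trans (mem_rankBlock.mp hj'))

lemma sum_sum_rankBlock {M : Type*} [AddCommMonoid M] {m : ℕ} (hm : n ≤ m) (f : ι → M) :
    ∑ k ∈ range m, ∑ j ∈ rankBlock p s k, f j = ∑ j, f j :=
  sum_fiberwise_of_maps_to (fun j _ => mem_range.mpr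
    ((Nat.div_le_self _ _).trans_lt ((p j).isLt.trans_le hm))) f

lemma sum_indicator_rankBlock {M : Type*} [AddCommMonoid M] {m : ℕ} (hm : n ≤ m) (x : ι → M) :
    ∑ k ∈ range m, (rankBlock p s k : Set ι).indicator x = x := by
  classical
  funext j
  simp only [Finset.sum_apply, Set.indicator_apply, mem_coe, mem_rankBlock]
  rw [sum_ite_eq, if_pos (mem_range.mpr
    ((Nat.div_le_self _ _).trans_lt ((p j).isLt.trans_le hm)))]

end Blocks

section Tail

variable {N : ℕ}

lemma sum_abs_compl_le_of_l1_add_le {x h : Fin N → ℝ} {T : Finset (Fin N)}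
    (hx : Function.support x ⊆ T) (hle : l1 (x + h) ≤ l1 x) :
    ∑ j ∈ Tᶜ, |h j| ≤ ∑ j ∈ T, |h j| := by
  have hx0 : ∀ j ∈ Tᶜ, x j = 0 := fun j hj =>
    Function.notMem_support.mp fun hj' => mem_compl.mp hj (hx hj')
  have hl1x : l1 x = ∑ j ∈ T, |x j| := by
    rw [l1, ← sum_add_sum_compl T, sum_eq_zero (s := Tᶜ) fun j hj => by rw [hx0 j hj, abs_zero],
      add_zero]
  have hl1xh : l1 (x + h) = ∑ j ∈ T, |x j + h j| + ∑ j ∈ Tᶜ, |h j| := by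
    rw [l1, ← sum_add_sum_compl T]
    exact congrArg _ (sum_congr rfl fun j hj => by simp [hx0 j hj])
  have htri : ∑ j ∈ T, |x j| ≤ ∑ j ∈ T, |x j + h j| + ∑ j ∈ T, |h j| := by
    rw [← sum_add_distrib]
    exact sum_le_sum fun j _ => by simpa using abs_sub (x j + h j) (h j)
  linarith

lemma sum_abs_le_sqrt_card_mul_l2_indicator (x : Fin N → ℝ) (A : Finset (Fin N)) :
    ∑ j ∈ A, |x j| ≤ √A.card * l2 ((A : Set (Fin N)).indicator x) := by
  rw [← pow_le_pow_iff_left₀ (sum_nonneg fun _ _ => abs_nonneg _)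
    (by positivity [l2_nonneg ((A : Set (Fin N)).indicator x)]) two_ne_zero,
    mul_pow, Real.sq_sqrt (Nat.cast_nonneg _), sq_l2_indicator]
  simpa only [sq_abs] using sq_sum_le_card_mul_sum_sq (s := A) (f := fun j => |x j|)

lemma l2_indicator_le_sum_abs_div_sqrt {x : Fin N → ℝ} {A B : Finset (Fin N)} {s : ℕ}
    (hA : A.card ≤ s) (hB : A.Nonempty → s ≤ B.card)
    (hAB : ∀ j ∈ A, ∀ j' ∈ B, |x j| ≤ |x j'|) :
    l2 ((A : Set (Fin N)).indicator x) ≤ (∑ j ∈ B, |x j|) / √s := by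
  rcases A.eq_empty_or_nonempty with rfl | hne
  · simp only [coe_empty, Set.indicator_empty]
    rw [← Pi.zero_def, l2_zero]
    positivity
  have hs : (0 : ℝ) < s := by exact_mod_cast (card_pos.mpr hne).trans_le hA
  have hBs : (s : ℝ) ≤ B.card := by exact_mod_cast hB hne
  have hpt : ∀ j ∈ A, |x j| ≤ (∑ j ∈ B, |x j|) / s := by
    intro j hj
    rw [le_div_iff₀ hs]
    calc |x j| * s ≤ ∑ _j' ∈ B, |x j| := by
          rw [sum_const, nsmul_eq_mul, mul_comm]
          exact mul_le_mul_of_nonneg_right hBs (abs_nonneg _)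
      _ ≤ ∑ j' ∈ B, |x j'| := sum_le_sum fun j' hj' => hAB j hj j' hj'
  rw [← pow_le_pow_iff_left₀ (l2_nonneg _) (by positivity) two_ne_zero, sq_l2_indicator,
    div_pow, Real.sq_sqrt hs.le]
  calc ∑ j ∈ A, x j ^ 2 ≤ ∑ _j ∈ A, ((∑ j ∈ B, |x j|) / s) ^ 2 :=
        sum_le_sum fun j hj => by
          rw [← sq_abs]
          exact pow_le_pow_left₀ (abs_nonneg _) (hpt j hj) 2
    _ = A.card * ((∑ j ∈ B, |x j|) / s) ^ 2 := by rw [sum_const, nsmul_eq_mul]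
    _ ≤ s * ((∑ j ∈ B, |x j|) / s) ^ 2 := by gcongr
    _ = (∑ j ∈ B, |x j|) ^ 2 / s := by field_simp

lemma l2_indicator_rankBlock_add_two_le {n s : ℕ} {x : Fin N → ℝ} {p : Fin N ≃ Fin n}
    (hs : 0 < s) (hanti : ∀ j j', s ≤ (p j : ℕ) → p j ≤ p j' → |x j'| ≤ |x j|) (k : ℕ) :
    l2 ((rankBlock p s (k + 2) : Set (Fin N)).indicator x)
      ≤ (∑ j ∈ rankBlock p s (k + 1), |x j|) / √s :=
  l2_indicator_le_sum_abs_div_sqrt (card_rankBlock_le hs) (le_card_rankBlock hs)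
    fun j hj j' hj' => by
      rw [mem_rankBlock] at hj hj'
      refine hanti j' j ?_ (Nat.lt_of_div_lt_div (by omega : (p j' : ℕ) / s < p j / s)).le
      simpa using (Nat.le_div_iff_mul_le hs).mp (by omega : 1 ≤ (p j' : ℕ) / s)

end Tail

section Decomposition

variable {N : ℕ}

lemma abs_le_l2_indicator_rankBlock_zero_union_one {n s : ℕ} {x : Fin N → ℝ} {p : Fin N ≃ Fin n}
    (hs : 0 < s) (hanti : ∀ j j', s ≤ (p j : ℕ) → p j ≤ p j' → |x j'| ≤ |x j|) (j : Fin N) :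
    |x j| ≤ l2 ((↑(rankBlock p s 0 ∪ rankBlock p s 1) : Set (Fin N)).indicator x) := by
  set H := rankBlock p s 0 ∪ rankBlock p s 1
  have hmem : ∀ i ∈ H, |x i| ≤ l2 ((H : Set (Fin N)).indicator x) := fun i hi => by
    simpa [Set.indicator_of_mem (mem_coe.mpr hi)] using abs_le_l2 ((H : Set (Fin N)).indicator x) i
  by_cases hj : j ∈ H
  · exact hmem j hj
  have hpj : 2 * s ≤ p j := by
    simp only [H, mem_union, mem_rankBlock, not_or] at hj
    rw [← Nat.le_div_iff_mul_le hs]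
    generalize (p j : ℕ) / s = q at hj ⊢
    omega
  have hsn : s < n := by linarith [(p j).isLt]
  set j1 := p.symm ⟨s, hsn⟩
  have hj1 : (p j1 : ℕ) = s := by simp [j1]
  have hj1H : j1 ∈ H := mem_union_right _ (mem_rankBlock.mpr (by rw [hj1, Nat.div_self hs]))
  exact (hanti j1 j hj1.ge (by rw [Fin.le_def, hj1]; omega)).trans (hmem j1 hj1H)

lemma exists_head_tail_decomposition (x : Fin N → ℝ) {T : Finset (Fin N)} {s : ℕ} (hs : 0 < s)
    (hT : T.card = s) :
    ∃ (T1 : Finset (Fin N)) (B : ℕ → Finset (Fin N)),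
      T1.card ≤ s ∧ (∀ k, (B k).card ≤ s) ∧
      Disjoint T T1 ∧ (∀ k, Disjoint T (B k)) ∧ (∀ k, Disjoint T1 (B k)) ∧
      x = (T : Set (Fin N)).indicator x + (T1 : Set (Fin N)).indicator x
        + ∑ k ∈ range N, (B k : Set (Fin N)).indicator x ∧
      ∑ k ∈ range N, l2 ((B k : Set (Fin N)).indicator x) ≤ (∑ j ∈ Tᶜ, |x j|) / √s ∧
      ∀ j, |x j| ≤ l2 ((T : Set (Fin N)).indicator x + (T1 : Set (Fin N)).indicator x) := by
  obtain ⟨p, hprefix, hanti⟩ := exists_equiv_fin_head_then_antitone T fun j => |x j|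
  rw [hT] at hprefix hanti
  have hB0 : rankBlock p s 0 = T := by
    ext j
    rw [mem_rankBlock, Nat.div_eq_zero_iff, hprefix]
    simp [hs.ne']
  have hhead : (T : Set (Fin N)).indicator x + (rankBlock p s 1 : Set (Fin N)).indicator x
      = (↑(rankBlock p s 0 ∪ rankBlock p s 1) : Set (Fin N)).indicator x := by
    rw [coe_union, hB0,
      Set.indicator_union_of_disjoint (disjoint_coe.mpr (hB0 ▸ disjoint_rankBlock zero_ne_one))]
    rfl
  refine ⟨rankBlock p s 1, fun k => rankBlock p s (k + 2), card_rankBlock_le hs,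
    fun k => card_rankBlock_le hs, hB0 ▸ disjoint_rankBlock zero_ne_one,
    fun k => hB0 ▸ disjoint_rankBlock (by omega), fun k => disjoint_rankBlock (by omega), ?_, ?_,
    fun j => hhead ▸ abs_le_l2_indicator_rankBlock_zero_union_one hs hanti j⟩
  · have := sum_indicator_rankBlock (p := p) (s := s) (m := N + 2) (by simp) x
    rw [sum_range_succ', sum_range_succ', hB0] at this
    nth_rewrite 1 [← this]
    abel
  · calc ∑ k ∈ range N, l2 ((rankBlock p s (k + 2) : Set (Fin N)).indicator x)
        ≤ ∑ k ∈ range N, (∑ j ∈ rankBlock p s (k + 1), |x j|) / √s :=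
          sum_le_sum fun k _ => l2_indicator_rankBlock_add_two_le hs hanti k
      _ = (∑ j ∈ Tᶜ, |x j|) / √s := by
          rw [← sum_div]
          have := sum_sum_rankBlock (p := p) (s := s) (m := N + 1) (by simp) fun j => |x j|
          rw [sum_range_succ', hB0, ← sum_add_sum_compl T] at this
          congr 1
          linarith

end Decomposition

lemma BRIP.mul_abs_le_of_cone {M N s : ℕ} {Φ : Matrix (Fin M) (Fin N) ℝ} {δ η : ℝ}
    (hΦ : BRIP Φ (2 * s) δ) {T : Finset (Fin N)} (hT : T.card = s) {h : Fin N → ℝ}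
    (hbox : ∀ j, |h j| ≤ 1) (hcone : ∑ j ∈ Tᶜ, |h j| ≤ ∑ j ∈ T, |h j|)
    (htube : l2 (Φ *ᵥ h) ≤ η) (j : Fin N) :
    (1 - (√2 + 1) * δ) * |h j| ≤ √(1 + δ) * η := by
  have hη : 0 ≤ √(1 + δ) * η := mul_nonneg (Real.sqrt_nonneg _) ((l2_nonneg _).trans htube)
  rcases Nat.eq_zero_or_pos s with rfl | hs
  · have hT0 : T = ∅ := card_eq_zero.mp hT
    subst hT0
    have : |h j| = 0 := by
      simp only [compl_empty, sum_empty] at hcone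
      exact le_antisymm ((single_le_sum (fun i _ => abs_nonneg (h i)) (mem_univ j)).trans hcone)
        (abs_nonneg _)
    rwa [this, mul_zero]
  obtain ⟨i, -⟩ := card_pos.mp (hT ▸ hs : 0 < T.card)
  have hδ : 0 ≤ δ := hΦ.nonneg (by omega) i
  obtain ⟨T1, B, hT1, hB, hTT1, hTB, hT1B, hdecomp, htail, hsup⟩ :=
    exists_head_tail_decomposition h hs hT
  have hhead : ∀ i, |(T : Set (Fin N)).indicator h i + (T1 : Set (Fin N)).indicator h i| ≤ 1 := by
    intro i
    have := congrFun (Set.indicator_union_of_disjoint (disjoint_coe.mpr hTT1) h) i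
    rw [← this]
    simpa only [Real.norm_eq_abs] using (norm_indicator_le_norm_self h i).trans (hbox i)
  have htail' : ∑ k ∈ range N, l2 ((B k : Set (Fin N)).indicator h)
      ≤ l2 ((T : Set (Fin N)).indicator h) := by
    have hsqrt : (0 : ℝ) < √s := Real.sqrt_pos.mpr (by exact_mod_cast hs)
    refine htail.trans ((div_le_iff₀ hsqrt).mpr (hcone.trans ?_))
    simpa [hT, mul_comm] using sum_abs_le_sqrt_card_mul_l2_indicator h T
  have hmain := hΦ.mul_l2_le_of_decomposition hδ (range N) hT.le hT1 hB hTT1 hTB hT1B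
    (Set.support_indicator_subset) (Set.support_indicator_subset)
    (fun _ => Set.support_indicator_subset) hhead htail'
  rw [← hdecomp] at hmain
  rcases le_or_gt 0 (1 - (√2 + 1) * δ) with hD | hD
  · calc (1 - (√2 + 1) * δ) * |h j|
        ≤ (1 - (√2 + 1) * δ)
            * l2 ((T : Set (Fin N)).indicator h + (T1 : Set (Fin N)).indicator h) :=
          mul_le_mul_of_nonneg_left (hsup j) hD
      _ ≤ √(1 + δ) * l2 (Φ *ᵥ h) := hmain
      _ ≤ √(1 + δ) * η := mul_le_mul_of_nonneg_left htube (Real.sqrt_nonneg _)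
  · exact (mul_nonpos_of_nonpos_of_nonneg hD.le (abs_nonneg _)).trans hη

lemma ite_half_lt_eq_of_abs_sub_lt {a b : ℝ} (hb : b = 0 ∨ b = 1) (hab : |a - b| < 1 / 2) :
    (if 1 / 2 < a then (1 : ℝ) else 0) = b := by
  rw [abs_lt] at hab
  rcases hb with rfl | rfl
  · rw [if_neg (by linarith)]
  · rw [if_pos (by linarith)]

/-- Under the hypotheses of the recovery theorem, if additionally
`Cε < 1/2` with `C = 4√(1+δ)/(1-(√2+1)δ)`, then rounding `x*` entrywise at
threshold `1/2` exactly recovers `x_true`. -/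
theorem stmt2 {M N s : ℕ} (Φ : Matrix (Fin M) (Fin N) ℝ) (y n : Fin M → ℝ)
    (xtrue xstar : Fin N → ℝ) (ε δ C : ℝ)
    (hy : y = Φ.mulVec xtrue + n) (hn : l2 n ≤ ε)
    (hbin : ∀ j, xtrue j = 0 ∨ xtrue j = 1)
    (hs : Set.ncard (Function.support xtrue) = s)
    (hδ : δ < Real.sqrt 2 - 1)
    (hBRIP : ∀ v : Fin N → ℝ, Set.ncard (Function.support v) ≤ 2 * s → (∀ i, |v i| ≤ 1) →
      (1 - δ) * (l2 v) ^ 2 ≤ (l2 (Φ.mulVec v)) ^ 2 ∧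
      (l2 (Φ.mulVec v)) ^ 2 ≤ (1 + δ) * (l2 v) ^ 2)
    (hfeas : l2 (Φ.mulVec xstar - y) ≤ ε ∧ ∀ j, 0 ≤ xstar j ∧ xstar j ≤ 1)
    (hopt : ∀ x : Fin N → ℝ, (l2 (Φ.mulVec x - y) ≤ ε ∧ ∀ j, 0 ≤ x j ∧ x j ≤ 1) →
      l1 xstar ≤ l1 x)
    (hC : C = 4 * Real.sqrt (1 + δ) / (1 - (Real.sqrt 2 + 1) * δ))
    (hthresh : C * ε < 1 / 2) :
    (fun j => if 1 / 2 < xstar j then (1 : ℝ) else 0) = xtrue := by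
  obtain ⟨T, hTsupp⟩ : ∃ T : Finset (Fin N), ↑T = Function.support xtrue :=
    ⟨_, (Set.toFinite _).coe_toFinset⟩
  have hT : T.card = s := by rw [← hs, ← hTsupp, Set.ncard_coe_finset]
  have hxtrue_feas : l2 (Φ *ᵥ xtrue - y) ≤ ε := by
    rwa [hy, sub_add_cancel_left, l2_neg]
  have hbox : ∀ j, |xstar j - xtrue j| ≤ 1 := fun j => by
    rcases hbin j with h | h <;> rw [h, abs_le] <;> constructor <;> linarith [hfeas.2 j]
  have hcone := sum_abs_compl_le_of_l1_add_le (h := xstar - xtrue) hTsupp.ge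
    (by simpa using hopt xtrue ⟨hxtrue_feas, fun j => by rcases hbin j with h | h <;> simp [h]⟩)
  have htube : l2 (Φ *ᵥ (xstar - xtrue)) ≤ 2 * ε := by
    have : Φ *ᵥ (xstar - xtrue) = (Φ *ᵥ xstar - y) + n := by rw [mulVec_sub, hy]; abel
    rw [this]
    linarith [l2_add_le (Φ *ᵥ xstar - y) n, hfeas.1]
  have hD : 0 < 1 - (√2 + 1) * δ := by
    have := mul_lt_mul_of_pos_left hδ (by positivity : (0 : ℝ) < √2 + 1)
    nlinarith [Real.sq_sqrt (zero_le_two : (0 : ℝ) ≤ 2)]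
  funext j
  refine ite_half_lt_eq_of_abs_sub_lt (hbin j) ?_
  have herr := BRIP.mul_abs_le_of_cone hBRIP hT hbox hcone htube j
  have : |xstar j - xtrue j| ≤ C * ε / 2 := by
    rw [hC, le_div_iff₀ two_pos, div_mul_eq_mul_div, le_div_iff₀ hD]
    nlinarith
  linarith
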